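/- Let A and B be unital C*-algebras and T₀ : A → B a real-linear, unital, *-preserving map satisfying T₀(abc + cba) = T₀(a)T₀(b)T₀(c) + T₀(c)T₀(b)T₀(a) for all a,b,c ∈ A, such that T₀(i·1_A) commutes with the image of T₀. Set P = (−i·T₀(i·1_A) + 1_B)/2. Then P·T₀(i·a) = i·P·T₀(a) and (1_B − P)·T₀(i·a)* = i·(1_B − P)·T₀(a)* for every a ∈ A; consequently the map a ↦ P·T₀(a) + (1_B − P)·T₀(a)* is complex-linear. -/
import Mathlib


theorem stmtN
    {A B : Type*}
    [NormedRing A] [StarRing A] [CStarRing A] [NormedAlgebra ℂ A]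
    [CompleteSpace A] [StarModule ℂ A]
    [NormedRing B] [StarRing B] [CStarRing B] [NormedAlgebra ℂ B]
    [CompleteSpace B] [StarModule ℂ B]
    (T₀ : A →ₗ[ℝ] B)
    (hone : T₀ 1 = 1)
    (hstar : ∀ x : A, T₀ (star x) = star (T₀ x))
    (htriple : ∀ a b c : A,
      T₀ (a * b * c + c * b * a)
        = T₀ a * T₀ b * T₀ c + T₀ c * T₀ b * T₀ a)
    (hcomm : ∀ a : A,
      T₀ ((Complex.I : ℂ) • (1 : A)) * T₀ a = T₀ a * T₀ ((Complex.I : ℂ) • (1 : A))) :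
    let P : B := (2 : ℂ)⁻¹ • ((-Complex.I : ℂ) • T₀ ((Complex.I : ℂ) • (1 : A)) + 1)
    (∀ a : A, P * T₀ ((Complex.I : ℂ) • a) = Complex.I • (P * T₀ a)) ∧
    (∀ a : A, (1 - P) * star (T₀ ((Complex.I : ℂ) • a))
        = Complex.I • ((1 - P) * star (T₀ a))) ∧
    (∀ (z : ℂ) (a : A),
      P * T₀ (z • a) + (1 - P) * star (T₀ (z • a))
        = z • (P * T₀ a + (1 - P) * star (T₀ a))) := by
  intro P
  set u : B := T₀ ((Complex.I : ℂ) • (1 : A)) with hu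
  have hustar : star u = -u := by
    have h := hstar ((Complex.I : ℂ) • (1 : A))
    rw [star_smul, star_one, Complex.star_def, Complex.conj_I] at h
    rw [← h, hu]
    rw [show ((-Complex.I : ℂ) • (1 : A)) = -((Complex.I : ℂ) • (1 : A)) by
      rw [neg_smul], map_neg]
  have hu2 : u * u = -1 := by
    have h := htriple ((Complex.I : ℂ) • (1 : A)) 1 ((Complex.I : ℂ) • (1 : A))
    rw [hone] at h
    have hmul : ((Complex.I : ℂ) • (1 : A)) * ((Complex.I : ℂ) • (1 : A)) = -1 := by
      rw [smul_mul_smul_comm, one_mul, Complex.I_mul_I, neg_smul, one_smul]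
    rw [mul_one, mul_one, hmul] at h
    simp only [map_add, map_neg, hone] at h
    have h2 := congrArg (fun b : B => (2 : ℂ)⁻¹ • b) h
    simp only [← two_smul ℂ, smul_smul] at h2
    norm_num at h2
    rw [hu]
    exact h2.symm
  have hT : ∀ a : A, T₀ ((Complex.I : ℂ) • a) = u * T₀ a := by
    intro a
    have h := htriple ((Complex.I : ℂ) • (1 : A)) 1 a
    simp only [hone, mul_one, one_mul] at h
    have hmul1 : ((Complex.I : ℂ) • (1 : A)) * a = (Complex.I : ℂ) • a := by
      rw [smul_mul_assoc, one_mul]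
    have hmul2 : a * ((Complex.I : ℂ) • (1 : A)) = (Complex.I : ℂ) • a := by
      rw [mul_smul_comm, mul_one]
    rw [hmul1, hmul2, ← hu, ← hcomm a, map_add] at h
    have h2 := congrArg (fun b : B => (2 : ℂ)⁻¹ • b) h
    simp only [← two_smul ℂ, smul_smul] at h2
    norm_num at h2
    exact h2
  have hcomm' : ∀ a : A, u * star (T₀ a) = star (T₀ a) * u := by
    intro a
    have h := congrArg star (hcomm a)
    rw [star_mul, star_mul, hustar, mul_neg, neg_mul] at h
    exact (neg_inj.mp h).symm
  have hPu : P * u = Complex.I • P := by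
    show ((2 : ℂ)⁻¹ • ((-Complex.I : ℂ) • u + 1)) * u
      = Complex.I • ((2 : ℂ)⁻¹ • ((-Complex.I : ℂ) • u + 1))
    rw [smul_mul_assoc, add_mul, smul_mul_assoc, hu2, one_mul]
    match_scalars <;> first
      | ring1
      | linear_combination Complex.I_sq
      | linear_combination (2⁻¹ : ℂ) * Complex.I_sq
      | linear_combination (-2⁻¹ : ℂ) * Complex.I_sq
      | linear_combination -Complex.I_sq
  have hQu : (1 - P) * u = (-Complex.I : ℂ) • (1 - P) := by
    rw [sub_mul, one_mul, hPu]
    show u - Complex.I • ((2 : ℂ)⁻¹ • ((-Complex.I : ℂ) • u + 1))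
      = (-Complex.I : ℂ) • ((1 : B) - (2 : ℂ)⁻¹ • ((-Complex.I : ℂ) • u + 1))
    match_scalars <;> first
      | ring1
      | linear_combination Complex.I_sq
      | linear_combination (2⁻¹ : ℂ) * Complex.I_sq
      | linear_combination (-2⁻¹ : ℂ) * Complex.I_sq
      | linear_combination -Complex.I_sq
  have part1 : ∀ a : A, P * T₀ ((Complex.I : ℂ) • a) = Complex.I • (P * T₀ a) := by
    intro a
    rw [hT a, ← mul_assoc, hPu, smul_mul_assoc]
  have part2 : ∀ a : A, (1 - P) * star (T₀ ((Complex.I : ℂ) • a))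
      = Complex.I • ((1 - P) * star (T₀ a)) := by
    intro a
    rw [hT a, star_mul, hustar, mul_neg, ← hcomm' a, mul_neg, ← mul_assoc, hQu,
      smul_mul_assoc, neg_smul, neg_neg]
  refine ⟨part1, part2, ?_⟩
  intro z a
  have hsm : ∀ (r : ℝ) (b : B), r • b = ((r : ℂ)) • b := by
    intro r b
    rw [← algebraMap_smul ℂ r b, Complex.coe_algebraMap]
  have hsmA : ∀ (r : ℝ) (x : A), r • x = ((r : ℂ)) • x := by
    intro r x
    rw [← algebraMap_smul ℂ r x, Complex.coe_algebraMap]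
  have hstar_r : ∀ (r : ℝ) (b : B), star (((r : ℂ)) • b) = ((r : ℂ)) • star b := by
    intro r b
    rw [star_smul, Complex.star_def, Complex.conj_ofReal]
  have hz : z • a = (z.re : ℝ) • a + (z.im : ℝ) • ((Complex.I : ℂ) • a) := by
    rw [hsmA, hsmA, smul_smul, ← add_smul, Complex.re_add_im]
  have key : ∀ b : B, ((z.re : ℂ)) • b + ((z.im : ℂ) * Complex.I) • b = z • b := by
    intro b
    rw [← add_smul, Complex.re_add_im]
  simp only [hz, map_add, map_smul, hsm, mul_add, smul_add, mul_smul_comm,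
    star_add, hstar_r, part1, part2, smul_smul]
  rw [← key (P * T₀ a), ← key ((1 - P) * star (T₀ a))]
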